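/- arXiv:1905.05257 — 8 statements merged into one kernel-verified Lean document; each statement's English description precedes it below -/
import Mathlib

section
/- Slice of the convex hull at a binary first-stage point (set identity in Proposition 1): let Z be a finite subset of (Fin n₁ → ℝ) × (Fin n₂ → ℝ) such that every coordinate of the first component of every point of Z equals 0 or 1, and let x̄ : Fin n₁ → ℝ satisfy x̄ i ∈ {0,1} for all i. Then {p ∈ convexHull ℝ Z | p.1 = x̄} = {x̄} ×ˢ convexHull ℝ (Y(x̄)), where Y(x̄) = {y | (x̄, y) ∈ Z}. -/
/-- Slice of the convex hull of a set with binary first components at a binary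
first-stage point: `{p ∈ convexHull ℝ Z | p.1 = x̄} = {x̄} ×ˢ convexHull ℝ (Y x̄)`
where `Y x̄ = {y | (x̄, y) ∈ Z}`. -/
theorem convexHull_slice_at_binary_point
    (n₁ n₂ : ℕ)
    (Z : Set ((Fin n₁ → ℝ) × (Fin n₂ → ℝ)))
    (hZfin : Z.Finite)
    (hZbin : ∀ p ∈ Z, ∀ i, p.1 i = 0 ∨ p.1 i = 1)
    (xbar : Fin n₁ → ℝ) (hxbar : ∀ i, xbar i = 0 ∨ xbar i = 1) :
    {p ∈ convexHull ℝ Z | p.1 = xbar} =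
      ({xbar} : Set (Fin n₁ → ℝ)) ×ˢ convexHull ℝ {y : Fin n₂ → ℝ | (xbar, y) ∈ Z} := by
  ext p
  constructor
  · rintro ⟨hp, hp1⟩
    have ht : (hZfin.toFinset : Set _) = Z := hZfin.coe_toFinset
    rw [← ht, Finset.convexHull_eq] at hp
    obtain ⟨w, hw0, hw1, hwc⟩ := hp
    set t := hZfin.toFinset with htdef
    -- p = sum
    have hps : ∑ z ∈ t, w z • z = p := by
      rw [← hwc, Finset.centerMass_eq_of_sum_1 _ _ hw1]
      rfl
    -- nonzero weight implies first component = xbar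
    have hkey : ∀ z ∈ t, w z ≠ 0 → z.1 = xbar := by
      intro z hz hwz
      by_contra hne
      obtain ⟨i, hi⟩ : ∃ i, z.1 i ≠ xbar i := by
        by_contra h; push_neg at h; exact hne (funext h)
      have hsum1 : ∑ q ∈ t, w q * q.1 i = xbar i := by
        calc ∑ q ∈ t, w q * q.1 i = (∑ q ∈ t, w q • q).1 i := by
              rw [Prod.fst_sum, Finset.sum_apply]
              simp [smul_eq_mul]
          _ = xbar i := by rw [hps, hp1]
      have hbin : ∀ q ∈ t, q.1 i = 0 ∨ q.1 i = 1 := by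
        intro q hq; exact hZbin q (hZfin.mem_toFinset.mp hq) i
      rcases hxbar i with h0 | h1
      · -- xbar i = 0 : all terms nonneg, sum 0
        have hz1 : z.1 i = 1 := by
          rcases hbin z hz with h | h
          · exact absurd (h.trans h0.symm) hi
          · exact h
        have hzero : ∀ q ∈ t, w q * q.1 i = 0 := by
          have : ∑ q ∈ t, w q * q.1 i = 0 := hsum1.trans h0
          refine (Finset.sum_eq_zero_iff_of_nonneg ?_).mp this
          intro q hq
          rcases hbin q hq with h | h <;> simp [h, hw0 q hq]
        have := hzero z hz
        rw [hz1, mul_one] at this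
        exact hwz this
      · -- xbar i = 1
        have hz0 : z.1 i = 0 := by
          rcases hbin z hz with h | h
          · exact h
          · exact absurd (h.trans h1.symm) hi
        have hsum2 : ∑ q ∈ t, w q * (1 - q.1 i) = 0 := by
          have : ∑ q ∈ t, w q * (1 - q.1 i)
              = (∑ q ∈ t, w q) - ∑ q ∈ t, w q * q.1 i := by
            rw [← Finset.sum_sub_distrib]; congr 1; ext q; ring
          rw [this, hw1, hsum1, h1, sub_self]
        have hzero : ∀ q ∈ t, w q * (1 - q.1 i) = 0 := by
          refine (Finset.sum_eq_zero_iff_of_nonneg ?_).mp hsum2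
          intro q hq
          rcases hbin q hq with h | h <;> simp [h, hw0 q hq]
        have := hzero z hz
        rw [hz0, sub_zero, mul_one] at this
        exact hwz this
    refine ⟨hp1, ?_⟩
    -- p.2 is convex combination over the filtered set
    set t' := t.filter (fun z => w z ≠ 0) with ht'
    have hsub : ∀ z ∈ t', (xbar, z.2) ∈ Z := by
      intro z hz
      obtain ⟨hzt, hwz⟩ := Finset.mem_filter.mp hz
      have := hkey z hzt hwz
      have hzZ : z ∈ Z := hZfin.mem_toFinset.mp hzt
      rwa [← this, Prod.mk.eta]
    have hw1' : ∑ z ∈ t', w z = 1 := by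
      rw [ht', Finset.sum_filter_ne_zero, hw1]
    have hmem : t'.centerMass w Prod.snd ∈
        convexHull ℝ {y : Fin n₂ → ℝ | (xbar, y) ∈ Z} := by
      apply Finset.centerMass_mem_convexHull
      · intro z hz; exact hw0 z (Finset.mem_filter.mp hz).1
      · rw [hw1']; norm_num
      · intro z hz; exact hsub z hz
    have hcm : t'.centerMass w Prod.snd = p.2 := by
      rw [Finset.centerMass_eq_of_sum_1 _ _ hw1']
      have : ∑ z ∈ t', w z • z.2 = ∑ z ∈ t, w z • z.2 := by
        apply Finset.sum_subset (Finset.filter_subset _ _)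
        intro z hz hnz
        have : w z = 0 := by
          by_contra h; exact hnz (Finset.mem_filter.mpr ⟨hz, h⟩)
        simp [this]
      rw [this, ← hps]
      simp [Prod.snd_sum]
    rwa [hcm] at hmem
  · rintro ⟨hp1, hp2⟩
    simp only [Set.mem_singleton_iff] at hp1
    -- affine map y ↦ (xbar, y)
    let f : (Fin n₂ → ℝ) →ᵃ[ℝ] ((Fin n₁ → ℝ) × (Fin n₂ → ℝ)) :=
      { toFun := fun y => (xbar, y)
        linear := LinearMap.prod 0 LinearMap.id
        map_vadd' := by intro y v; ext <;> simp }
    have himg : f '' (convexHull ℝ {y : Fin n₂ → ℝ | (xbar, y) ∈ Z})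
        = convexHull ℝ (f '' {y : Fin n₂ → ℝ | (xbar, y) ∈ Z}) :=
      f.image_convexHull _
    have hsub : f '' {y : Fin n₂ → ℝ | (xbar, y) ∈ Z} ⊆ Z := by
      rintro _ ⟨y, hy, rfl⟩; exact hy
    have : f p.2 ∈ convexHull ℝ Z := by
      have h1 : f p.2 ∈ convexHull ℝ (f '' {y : Fin n₂ → ℝ | (xbar, y) ∈ Z}) := by
        rw [← himg]; exact ⟨p.2, hp2, rfl⟩
      exact convexHull_mono hsub h1
    have hfp : f p.2 = p := by
      show (xbar, p.2) = p
      exact Prod.ext hp1.symm rfl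
    exact ⟨hfp ▸ this, hp1⟩
end

section
/- Exactness of the lower bound when all first-stage variables are fixed (Proposition 1): under the two-stage setting, let x̄ ∈ X have coordinates in {0,1}, and assume additionally that for every c ∈ U the function y ↦ f((x̄, y), c) is concave on convexHull ℝ (Y(x̄)). Then sup_{c ∈ U} inf_{p ∈ convexHull ℝ Z, p.1 = x̄} f(p, c) = sup_{c ∈ U} inf_{y ∈ Y(x̄)} f((x̄, y), c); that is, the lower bound with the first stage fixed to x̄ equals the exact two-stage objective value of x̄. -/
/-- Proposition 1: if all first-stage variables are fixed to a binary `x̄ ∈ X`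
(and the second-stage objective is concave on the hull of `Y x̄` for each
scenario), then the convex-hull lower bound with first stage fixed to `x̄`
equals the exact two-stage objective value of `x̄`. -/
theorem lower_bound_exact_if_first_stage_fixed
    (n₁ n₂ m : ℕ)
    (Z : Set ((Fin n₁ → ℝ) × (Fin n₂ → ℝ)))
    (hZfin : Z.Finite) (hZne : Z.Nonempty)
    (hZbin : ∀ p ∈ Z, (∀ i, p.1 i = 0 ∨ p.1 i = 1) ∧ (∀ j, p.2 j = 0 ∨ p.2 j = 1))
    (U : Set (Fin m → ℝ)) (hUne : U.Nonempty) (hUcomp : IsCompact U)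
    (f : ((Fin n₁ → ℝ) × (Fin n₂ → ℝ)) → (Fin m → ℝ) → ℝ)
    (hf : Continuous fun p : ((Fin n₁ → ℝ) × (Fin n₂ → ℝ)) × (Fin m → ℝ) => f p.1 p.2)
    (X : Set (Fin n₁ → ℝ)) (hX : X = {x | ∃ y, (x, y) ∈ Z})
    (Y : (Fin n₁ → ℝ) → Set (Fin n₂ → ℝ)) (hY : ∀ x, Y x = {y | (x, y) ∈ Z})
    (xbar : Fin n₁ → ℝ) (hxbarX : xbar ∈ X) (hxbarbin : ∀ i, xbar i = 0 ∨ xbar i = 1)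
    (hconc : ∀ c ∈ U, ConcaveOn ℝ (convexHull ℝ (Y xbar)) (fun y => f (xbar, y) c)) :
    sSup ((fun c => sInf ((fun p => f p c) '' {p ∈ convexHull ℝ Z | p.1 = xbar})) '' U) =
      sSup ((fun c => sInf ((fun y => f (xbar, y) c) '' Y xbar)) '' U) := by
  have hYx : Y xbar = {y | (xbar, y) ∈ Z} := hY xbar
  obtain ⟨y₀, hy₀⟩ : ∃ y, (xbar, y) ∈ Z := by rw [hX] at hxbarX; exact hxbarX
  have hYne : (Y xbar).Nonempty := ⟨y₀, by rw [hYx]; exact hy₀⟩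
  have hYfin : (Y xbar).Finite := by
    apply (hZfin.image Prod.snd).subset
    intro y hy
    rw [hYx] at hy
    exact ⟨(xbar, y), hy, rfl⟩
  -- key: a point of the hull of `Z` whose first component is `xbar` has its
  -- second component in the hull of `Y xbar`
  have key : ∀ p : (Fin n₁ → ℝ) × (Fin n₂ → ℝ), p ∈ convexHull ℝ Z → p.1 = xbar →
      p.2 ∈ convexHull ℝ (Y xbar) := by
    intro p hp hp1
    rw [convexHull_eq] at hp
    obtain ⟨ι, t, w, z, hw0, hw1, hz, hcm⟩ := hp
    rw [Finset.centerMass_eq_of_sum_1 _ _ hw1] at hcm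
    have hsum1 : ∀ j, ∑ k ∈ t, w k * (z k).1 j = xbar j := by
      intro j
      have h := congrArg (fun q : (Fin n₁ → ℝ) × (Fin n₂ → ℝ) => q.1 j) hcm
      simp only [Prod.fst_sum] at h
      rw [← hp1]
      rw [← h]
      rw [Finset.sum_apply]
      simp [Prod.smul_fst]
    have hfst : ∀ i ∈ t, w i ≠ 0 → (z i).1 = xbar := by
      intro i hi hwi
      funext j
      rcases hxbarbin j with h0 | h1
      · -- all terms nonneg summing to 0
        have hterm : ∀ k ∈ t, 0 ≤ w k * (z k).1 j := by
          intro k hk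
          apply mul_nonneg (hw0 k hk)
          rcases ((hZbin _ (hz k hk)).1 j) with h | h <;> rw [h] <;> norm_num
        have hz0 : w i * (z i).1 j = 0 := by
          have := (Finset.sum_eq_zero_iff_of_nonneg hterm).1 (by rw [hsum1 j, h0]) i hi
          exact this
        have := mul_eq_zero.1 hz0
        rcases this with h | h
        · exact absurd h hwi
        · rw [h, h0]
      · -- consider weights times (1 - value)
        have hterm : ∀ k ∈ t, 0 ≤ w k * (1 - (z k).1 j) := by
          intro k hk
          apply mul_nonneg (hw0 k hk)
          rcases ((hZbin _ (hz k hk)).1 j) with h | h <;> rw [h] <;> norm_num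
        have hsum0 : ∑ k ∈ t, w k * (1 - (z k).1 j) = 0 := by
          have : ∑ k ∈ t, w k * (1 - (z k).1 j)
              = (∑ k ∈ t, w k) - ∑ k ∈ t, w k * (z k).1 j := by
            rw [← Finset.sum_sub_distrib]
            congr 1; funext k; ring
          rw [this, hw1, hsum1 j, h1]; ring
        have hz0 := (Finset.sum_eq_zero_iff_of_nonneg hterm).1 hsum0 i hi
        have := mul_eq_zero.1 hz0
        rcases this with h | h
        · exact absurd h hwi
        · rw [h1]; linarith
    -- restrict to nonzero weights
    have hsnd : p.2 = ∑ k ∈ t.filter (fun k => w k ≠ 0), w k • (z k).2 := by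
      have h := congrArg Prod.snd hcm
      simp only [Prod.snd_sum, Prod.smul_snd] at h
      rw [← h]
      rw [Finset.sum_filter_of_ne]
      intro k _ hk
      intro hw
      exact hk (by rw [hw, zero_smul])
    rw [hsnd, ← Finset.centerMass_eq_of_sum_1]
    · apply Finset.centerMass_mem_convexHull
      · intro i hi; exact hw0 i (Finset.mem_filter.1 hi).1
      · rw [Finset.sum_filter_ne_zero, hw1]; norm_num
      · intro i hi
        obtain ⟨hit, hwi⟩ := Finset.mem_filter.1 hi
        rw [hYx]
        have h1 := hfst i hit hwi
        have : ((z i).1, (z i).2) ∈ Z := by simpa using hz i hit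
        rw [h1] at this
        exact this
    · rw [Finset.sum_filter_ne_zero, hw1]
  -- pointwise equality of the inner infima
  have hinf : ∀ c ∈ U,
      sInf ((fun p => f p c) '' {p ∈ convexHull ℝ Z | p.1 = xbar})
        = sInf ((fun y => f (xbar, y) c) '' Y xbar) := by
    intro c hc
    set A := (fun p => f p c) '' {p ∈ convexHull ℝ Z | p.1 = xbar} with hA
    set B := (fun y => f (xbar, y) c) '' Y xbar with hB
    have hBne : B.Nonempty := hYne.image _
    have hBbdd : BddBelow B := (hYfin.image _).bddBelow
    have hBsub : B ⊆ A := by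
      rintro b ⟨y, hy, rfl⟩
      refine ⟨(xbar, y), ⟨subset_convexHull ℝ Z ?_, rfl⟩, rfl⟩
      rw [hYx] at hy; exact hy
    have hAlb : ∀ a ∈ A, sInf B ≤ a := by
      rintro a ⟨p, ⟨hp, hp1⟩, rfl⟩
      have h2 := key p hp hp1
      obtain ⟨y, hy, hle⟩ :=
        (hconc c hc).exists_le_of_mem_convexHull (subset_convexHull ℝ _) h2
      calc sInf B ≤ f (xbar, y) c := csInf_le hBbdd ⟨y, hy, rfl⟩
        _ ≤ f (xbar, p.2) c := hle
        _ = f p c := by rw [← hp1]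
    have hAne : A.Nonempty := hBne.mono hBsub
    apply le_antisymm
    · exact csInf_le_csInf ⟨sInf B, fun a ha => hAlb a ha⟩ hBne hBsub
    · exact le_csInf hAne hAlb
  congr 1
  exact Set.image_congr hinf
end

section
/- Level-set reformulation of the lower bound problem: let d, m be natural numbers, S a nonempty finite subset of (Fin d → ℝ), U a nonempty compact subset of (Fin m → ℝ), and f : (Fin d → ℝ) → (Fin m → ℝ) → ℝ jointly continuous such that for every c ∈ U the function z ↦ f z c is concave on convexHull ℝ S. Then sSup {μ : ℝ | ∃ c ∈ U, ∀ z ∈ S, μ ≤ f z c} = sup_{c ∈ U} inf_{z ∈ convexHull ℝ S} f z c; i.e. the optimal value of the epigraph formulation with one constraint per point of S equals the max–min value over the convex hull of S. -/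
/-- Level-set reformulation of the lower-bound problem: the optimal value of the
epigraph formulation `max {μ | ∃ c ∈ U, ∀ z ∈ S, μ ≤ f z c}` equals the
max–min value `sup_{c ∈ U} inf_{z ∈ convexHull ℝ S} f z c`. -/
theorem level_set_reformulation
    (d m : ℕ)
    (S : Set (Fin d → ℝ)) (hSfin : S.Finite) (hSne : S.Nonempty)
    (U : Set (Fin m → ℝ)) (hUne : U.Nonempty) (hUcomp : IsCompact U)
    (f : (Fin d → ℝ) → (Fin m → ℝ) → ℝ)
    (hf : Continuous fun p : (Fin d → ℝ) × (Fin m → ℝ) => f p.1 p.2)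
    (hconc : ∀ c ∈ U, ConcaveOn ℝ (convexHull ℝ S) (fun z => f z c)) :
    sSup {μ : ℝ | ∃ c ∈ U, ∀ z ∈ S, μ ≤ f z c} =
      sSup ((fun c => sInf ((fun z => f z c) '' convexHull ℝ S)) '' U) := by
  obtain ⟨z₀, hz₀⟩ := hSne
  obtain ⟨c₀, hc₀⟩ := hUne
  set G : (Fin m → ℝ) → ℝ := fun c => sInf ((fun z => f z c) '' convexHull ℝ S) with hG
  have hSsub : S ⊆ convexHull ℝ S := subset_convexHull ℝ S
  -- For c ∈ U, G c equals the inf over S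
  have key : ∀ c ∈ U, G c = sInf ((fun z => f z c) '' S) := by
    intro c hc
    have hne : ((fun z => f z c) '' S).Nonempty := ⟨_, ⟨z₀, hz₀, rfl⟩⟩
    have hfinS : ((fun z => f z c) '' S).Finite := hSfin.image _
    have hlb : ∀ x ∈ (fun z => f z c) '' convexHull ℝ S,
        sInf ((fun z => f z c) '' S) ≤ x := by
      rintro x ⟨z, hz, rfl⟩
      obtain ⟨y, hy, hyle⟩ :=
        (hconc c hc).exists_le_of_mem_convexHull hSsub hz
      exact le_trans (csInf_le hfinS.bddBelow ⟨y, hy, rfl⟩) hyle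
    refine le_antisymm ?_ ?_
    · exact csInf_le_csInf ⟨_, hlb⟩ hne (Set.image_mono hSsub)
    · exact le_csInf ⟨_, ⟨z₀, hSsub hz₀, rfl⟩⟩ hlb
  -- G c ≤ f z c for z ∈ S, c ∈ U
  have hGle : ∀ c ∈ U, ∀ z ∈ S, G c ≤ f z c := by
    intro c hc z hz
    rw [key c hc]
    exact csInf_le (hSfin.image _).bddBelow ⟨z, hz, rfl⟩
  -- bound on G over U
  have hcont : Continuous fun c => f z₀ c :=
    hf.comp (continuous_const.prodMk continuous_id)
  obtain ⟨B, hB⟩ := (hUcomp.image hcont).bddAbove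
  have hBle : ∀ c ∈ U, f z₀ c ≤ B := fun c hc => hB ⟨c, hc, rfl⟩
  have hbddG : BddAbove (G '' U) := ⟨B, by
    rintro x ⟨c, hc, rfl⟩
    exact le_trans (hGle c hc z₀ hz₀) (hBle c hc)⟩
  set A : Set ℝ := {μ : ℝ | ∃ c ∈ U, ∀ z ∈ S, μ ≤ f z c} with hA
  have hAne : A.Nonempty := ⟨G c₀, c₀, hc₀, hGle c₀ hc₀⟩
  have hAbdd : BddAbove A := ⟨B, by
    rintro μ ⟨c, hc, hμ⟩
    exact le_trans (hμ z₀ hz₀) (hBle c hc)⟩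
  refine le_antisymm ?_ ?_
  · refine csSup_le hAne ?_
    rintro μ ⟨c, hc, hμ⟩
    have : μ ≤ G c := by
      rw [key c hc]
      refine le_csInf ⟨_, ⟨z₀, hz₀, rfl⟩⟩ ?_
      rintro x ⟨z, hz, rfl⟩
      exact hμ z hz
    exact le_trans this (le_csSup hbddG ⟨c, hc, rfl⟩)
  · refine csSup_le_csSup hAbdd (⟨G c₀, c₀, hc₀, rfl⟩) ?_
    rintro x ⟨c, hc, rfl⟩
    exact ⟨c, hc, hGle c hc⟩
end

section
/- Correctness of the termination criterion of the oracle-based column generation algorithm: let S be a nonempty finite subset of (Fin d → ℝ), S' a nonempty subset of S, U a set of scenarios in (Fin m → ℝ), f : (Fin d → ℝ) → (Fin m → ℝ) → ℝ, c* ∈ U and μ* ∈ ℝ. Assume (i) μ* ≤ f z c* for all z ∈ S' (feasibility of (μ*, c*)), (ii) for every c ∈ U there exists z ∈ S' with f z c ≤ μ* (maximality of μ* for the restricted problem over S'), and (iii) μ* ≤ f z c* for all z ∈ S (the termination condition: the oracle finds no violated point). Then sup_{c ∈ U} inf_{z ∈ S} f z c = μ*, i.e. μ* is the optimal value of the full max–min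 problem over S. -/
/-- Correctness of the termination criterion of the oracle-based column
generation algorithm: if `(μ*, c*)` is feasible and maximal for the restricted
problem over `S'` and the oracle finds no violated point in `S`, then `μ*` is
the optimal value of the full max–min problem over `S`. -/
theorem column_generation_termination
    (d m : ℕ)
    (S : Set (Fin d → ℝ)) (hSfin : S.Finite) (hSne : S.Nonempty)
    (S' : Set (Fin d → ℝ)) (hS'ne : S'.Nonempty) (hS'sub : S' ⊆ S)
    (U : Set (Fin m → ℝ))
    (f : (Fin d → ℝ) → (Fin m → ℝ) → ℝ)
    (cstar : Fin m → ℝ) (hcstar : cstar ∈ U) (μstar : ℝ)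
    (hfeas : ∀ z ∈ S', μstar ≤ f z cstar)
    (hmax : ∀ c ∈ U, ∃ z ∈ S', f z c ≤ μstar)
    (hterm : ∀ z ∈ S, μstar ≤ f z cstar) :
    sSup ((fun c => sInf ((fun z => f z c) '' S)) '' U) = μstar := by
  have hub : ∀ x ∈ (fun c => sInf ((fun z => f z c) '' S)) '' U, x ≤ μstar := by
    rintro x ⟨c, hc, rfl⟩
    obtain ⟨z, hz, hfz⟩ := hmax c hc
    exact le_trans (csInf_le ((hSfin.image _).bddBelow) ⟨z, hS'sub hz, rfl⟩) hfz
  apply le_antisymm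
  · exact csSup_le ⟨_, cstar, hcstar, rfl⟩ hub
  · have h1 : μstar ≤ sInf ((fun z => f z cstar) '' S) := by
      apply le_csInf (hSne.image _)
      rintro x ⟨z, hz, rfl⟩
      exact hterm z hz
    exact h1.trans (le_csSup ⟨μstar, hub⟩ ⟨cstar, hcstar, rfl⟩)
end

section
/- At termination of the column generation algorithm the generated subset is exact for the convex-hull problem: let S be a nonempty finite subset of (Fin d → ℝ), S' a nonempty subset of S, U a set in (Fin m → ℝ), f : (Fin d → ℝ) → (Fin m → ℝ) → ℝ, c* ∈ U and μ* ∈ ℝ. Assume (i) μ* ≤ f z c* for all z ∈ S', (ii) for every c ∈ U there exists z ∈ S' with f z c ≤ μ*, (iii) μ* ≤ f z c* for all z ∈ S, and (iv) for every c ∈ U the function z ↦ f z c is concave on convexHull ℝ S. Then sup_{c ∈ U} inf_{z ∈ convexHull ℝ S'} f z c = μ* = sup_{c ∈ U} inf_{z ∈ convexHull ℝ S} f z c; in particular the optimal solution of the convex-hull problem over S is already captured by convexHull ℝ S'. -/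
/-- At termination of the column generation algorithm the generated subset `S'`
is exact for the convex-hull problem:
`sup_{c ∈ U} inf_{z ∈ convexHull ℝ S'} f z c = μ* = sup_{c ∈ U} inf_{z ∈ convexHull ℝ S} f z c`. -/
theorem column_generation_convex_hull_exact
    (d m : ℕ)
    (S : Set (Fin d → ℝ)) (hSfin : S.Finite) (hSne : S.Nonempty)
    (S' : Set (Fin d → ℝ)) (hS'ne : S'.Nonempty) (hS'sub : S' ⊆ S)
    (U : Set (Fin m → ℝ))
    (f : (Fin d → ℝ) → (Fin m → ℝ) → ℝ)
    (cstar : Fin m → ℝ) (hcstar : cstar ∈ U) (μstar : ℝ)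
    (hfeas : ∀ z ∈ S', μstar ≤ f z cstar)
    (hmax : ∀ c ∈ U, ∃ z ∈ S', f z c ≤ μstar)
    (hterm : ∀ z ∈ S, μstar ≤ f z cstar)
    (hconc : ∀ c ∈ U, ConcaveOn ℝ (convexHull ℝ S) (fun z => f z c)) :
    sSup ((fun c => sInf ((fun z => f z c) '' convexHull ℝ S')) '' U) = μstar ∧
      μstar = sSup ((fun c => sInf ((fun z => f z c) '' convexHull ℝ S)) '' U) := by
  have key : ∀ (T : Set (Fin d → ℝ)), T.Nonempty → S' ⊆ T → T ⊆ S →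
      (∀ z ∈ T, μstar ≤ f z cstar) →
      sSup ((fun c => sInf ((fun z => f z c) '' convexHull ℝ T)) '' U) = μstar := by
    intro T hTne hS'T hTS hlb
    have hTfin : T.Finite := hSfin.subset hTS
    have hhullne : (convexHull ℝ T).Nonempty := hTne.mono (subset_convexHull ℝ T)
    -- minimum principle: every value on the hull dominates a value on T
    have hmin : ∀ c ∈ U, ∀ x ∈ convexHull ℝ T, ∃ y ∈ T, f y c ≤ f x c := by
      intro c hc x hx
      exact (hconc c hc).exists_le_of_mem_convexHull
        (hTS.trans (subset_convexHull ℝ S)) hx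
    -- the image over the hull is bounded below
    have hbdd : ∀ c ∈ U, BddBelow ((fun z => f z c) '' convexHull ℝ T) := by
      intro c hc
      obtain ⟨m0, hm0⟩ := (hTfin.image (fun z => f z c)).bddBelow
      refine ⟨m0, ?_⟩
      rintro b ⟨x, hx, rfl⟩
      obtain ⟨y, hyT, hy⟩ := hmin c hc x hx
      exact (hm0 ⟨y, hyT, rfl⟩).trans hy
    -- each inner infimum is ≤ μstar
    have hub : ∀ c ∈ U, sInf ((fun z => f z c) '' convexHull ℝ T) ≤ μstar := by
      intro c hc
      obtain ⟨z, hzS', hz⟩ := hmax c hc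
      exact (csInf_le (hbdd c hc)
        ⟨z, subset_convexHull ℝ T (hS'T hzS'), rfl⟩).trans hz
    -- at cstar the inner infimum is ≥ μstar
    have hlb' : μstar ≤ sInf ((fun z => f z cstar) '' convexHull ℝ T) := by
      apply le_csInf (hhullne.image _)
      rintro b ⟨x, hx, rfl⟩
      obtain ⟨y, hyT, hy⟩ := hmin cstar hcstar x hx
      exact (hlb y hyT).trans hy
    have hba : BddAbove ((fun c => sInf ((fun z => f z c) '' convexHull ℝ T)) '' U) := by
      refine ⟨μstar, ?_⟩
      rintro b ⟨c, hc, rfl⟩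
      exact hub c hc
    refine le_antisymm ?_ ?_
    · refine csSup_le ⟨_, Set.mem_image_of_mem _ hcstar⟩ ?_
      rintro b ⟨c, hc, rfl⟩
      exact hub c hc
    · calc μstar ≤ sInf ((fun z => f z cstar) '' convexHull ℝ T) := hlb'
        _ ≤ _ := le_csSup hba (Set.mem_image_of_mem _ hcstar)
  exact ⟨key S' hS'ne subset_rfl hS'sub hfeas,
    (key S hSne hS'sub subset_rfl hterm).symm⟩
end

section
/- Minimax equality for biaffine objectives (used to compute the optimal convex combination of generated solutions): let f : (Fin d → ℝ) → (Fin m → ℝ) → ℝ be jointly continuous and affine in each argument separately, i.e. for each fixed c the map z ↦ f z c satisfies f (t • z₁ + (1−t) • z₂) c = t * f z₁ c + (1−t) * f z₂ c for all t ∈ [0,1], and symmetrically for each fixed z the map c ↦ f z c is affine on segments. Let U be a nonempty compact convex subset of (Fin m → ℝ) and S a nonempty finite subset of (Fin d → ℝ). Then sup_{c ∈ U} inf_{z ∈ convexHull ℝ S} f z c = inf_{z ∈ convexHull ℝ S} sup_{c ∈ U} f z c. -/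
/-- Minimax equality for biaffine objectives: if `f` is jointly continuous and
affine in each argument separately, `U` is nonempty compact convex and `S` is a
nonempty finite set, then
`sup_{c ∈ U} inf_{z ∈ convexHull ℝ S} f z c = inf_{z ∈ convexHull ℝ S} sup_{c ∈ U} f z c`. -/
theorem biaffine_minimax
    (d m : ℕ)
    (f : (Fin d → ℝ) → (Fin m → ℝ) → ℝ)
    (hf : Continuous fun p : (Fin d → ℝ) × (Fin m → ℝ) => f p.1 p.2)
    (haffz : ∀ (c : Fin m → ℝ) (z₁ z₂ : Fin d → ℝ), ∀ t ∈ Set.Icc (0:ℝ) 1,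
      f (t • z₁ + (1 - t) • z₂) c = t * f z₁ c + (1 - t) * f z₂ c)
    (haffc : ∀ (z : Fin d → ℝ) (c₁ c₂ : Fin m → ℝ), ∀ t ∈ Set.Icc (0:ℝ) 1,
      f z (t • c₁ + (1 - t) • c₂) = t * f z c₁ + (1 - t) * f z c₂)
    (U : Set (Fin m → ℝ)) (hUne : U.Nonempty) (hUcomp : IsCompact U) (hUconv : Convex ℝ U)
    (S : Set (Fin d → ℝ)) (hSfin : S.Finite) (hSne : S.Nonempty) :
    sSup ((fun c => sInf ((fun z => f z c) '' convexHull ℝ S)) '' U) =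
      sInf ((fun z => sSup ((fun c => f z c) '' U)) '' convexHull ℝ S) := by
  classical
  set H := convexHull ℝ S with hHdef
  have hHcomp : IsCompact H := hSfin.isCompact_convexHull ℝ
  have hHne : H.Nonempty := hSne.mono (subset_convexHull ℝ S)
  set t : Finset (Fin d → ℝ) := hSfin.toFinset with htdef
  have htcoe : (↑t : Set (Fin d → ℝ)) = S := hSfin.coe_toFinset
  have htne : t.Nonempty := by
    obtain ⟨x, hx⟩ := hSne
    exact ⟨x, hSfin.mem_toFinset.2 hx⟩
  haveI : Nonempty ↥t := ⟨⟨htne.choose, htne.choose_spec⟩⟩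
  -- continuity in each variable
  have hcontz : ∀ c, Continuous fun z => f z c := fun c =>
    hf.comp (continuous_id.prodMk continuous_const)
  have hcontc : ∀ z, Continuous fun c => f z c := fun z =>
    hf.comp (continuous_const.prodMk continuous_id)
  -- the map z ↦ f z c is given by an affine map
  have haffmap : ∀ c, ∃ A : (Fin d → ℝ) →ᵃ[ℝ] ℝ, ∀ z, A z = f z c := by
    intro c
    have hmid : ∀ x y, f (midpoint ℝ x y) c = midpoint ℝ (f x c) (f y c) := by
      intro x y
      have h := haffz c x y (1/2) (by norm_num)
      have harg : ((1:ℝ)/2) • x + ((1:ℝ) - 1/2) • y = (⅟2 : ℝ) • (x + y) := by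
        rw [invOf_eq_inv]
        norm_num [smul_add]
      rw [harg] at h
      rw [midpoint_eq_smul_add, midpoint_eq_smul_add, h, smul_eq_mul]
      rw [invOf_eq_inv]
      ring
    exact ⟨AffineMap.ofMapMidpoint _ hmid (hcontz c), fun z => rfl⟩
  -- affine combination identity
  have hL1 : ∀ (c : Fin m → ℝ) (ν : ↥t → ℝ), ∑ i, ν i = 1 →
      f (∑ i, ν i • (i : ↥t).val) c = ∑ i, ν i * f (i : ↥t).val c := by
    intro c ν hν
    obtain ⟨A, hA⟩ := haffmap c
    have h1 : ∑ i, ν i • (i : ↥t).val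
        = Finset.univ.affineCombination ℝ (Subtype.val : ↥t → (Fin d → ℝ)) ν := by
      rw [affineCombination_eq_centerMass hν, Finset.centerMass_eq_of_sum_1 _ _ hν]
    rw [h1, ← hA, Finset.map_affineCombination _ _ _ hν,
      affineCombination_eq_centerMass hν, Finset.centerMass_eq_of_sum_1 _ _ hν]
    simp [hA, smul_eq_mul]
  -- decomposition of elements of the hull
  have hL2 : ∀ z ∈ H, ∃ ν : ↥t → ℝ, (∀ i, 0 ≤ ν i) ∧ ∑ i, ν i = 1 ∧
      z = ∑ i, ν i • (i : ↥t).val := by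
    intro z hz
    rw [hHdef, hSfin.convexHull_eq] at hz
    obtain ⟨w, hw0, hw1, hwz⟩ := hz
    refine ⟨fun i => w i.val, fun i => hw0 _ (by rw [← htcoe]; exact i.2), ?_, ?_⟩
    · rw [Finset.sum_coe_sort t w]; exact hw1
    · rw [← hwz, Finset.centerMass_eq_of_sum_1 _ _ hw1]
      simp only [id]
      exact (Finset.sum_coe_sort t (fun y => w y • y)).symm

  -- global bounds
  have hBcomp : IsCompact ((fun p : (Fin d → ℝ) × (Fin m → ℝ) => f p.1 p.2) '' (H ×ˢ U)) :=
    (hHcomp.prod hUcomp).image hf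
  obtain ⟨lb, hlb⟩ := hBcomp.bddBelow
  obtain ⟨ub, hub⟩ := hBcomp.bddAbove
  obtain ⟨z₀, hz₀⟩ := hHne
  obtain ⟨c₀, hc₀⟩ := hUne
  have hmemB : ∀ z ∈ H, ∀ c ∈ U,
      f z c ∈ (fun p : (Fin d → ℝ) × (Fin m → ℝ) => f p.1 p.2) '' (H ×ˢ U) :=
    fun z hz c hc => ⟨(z, c), ⟨hz, hc⟩, rfl⟩
  -- inner sets compactness facts
  have hKccomp : ∀ c, IsCompact ((fun z => f z c) '' H) := fun c => hHcomp.image (hcontz c)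
  have hKzcomp : ∀ z, IsCompact ((fun c => f z c) '' U) := fun z => hUcomp.image (hcontc z)
  have hinf_le : ∀ (c : Fin m → ℝ), ∀ z ∈ H, sInf ((fun z => f z c) '' H) ≤ f z c :=
    fun c z hz => csInf_le (hKccomp c).bddBelow ⟨z, hz, rfl⟩
  have hle_sup : ∀ (z : Fin d → ℝ), ∀ c ∈ U, f z c ≤ sSup ((fun c => f z c) '' U) :=
    fun z c hc => le_csSup (hKzcomp z).bddAbove ⟨c, hc, rfl⟩
  set P := (fun c => sInf ((fun z => f z c) '' H)) '' U with hPdef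
  set Q := (fun z => sSup ((fun c => f z c) '' U)) '' H with hQdef
  have hPbdd : BddAbove P := by
    refine ⟨ub, ?_⟩
    rintro a ⟨c, hc, rfl⟩
    exact le_trans (hinf_le c z₀ hz₀) (hub (hmemB z₀ hz₀ c hc))
  have hQbdd : BddBelow Q := by
    refine ⟨lb, ?_⟩
    rintro b ⟨z, hz, rfl⟩
    exact le_trans (hlb (hmemB z hz c₀ hc₀)) (hle_sup z c₀ hc₀)
  set β := sSup P with hβdef
  -- easy direction
  have heasy : sSup P ≤ sInf Q := by
    refine csSup_le ⟨_, ⟨c₀, hc₀, rfl⟩⟩ ?_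
    rintro a ⟨c, hc, rfl⟩
    refine le_csInf ⟨_, ⟨z₀, hz₀, rfl⟩⟩ ?_
    rintro b ⟨z, hz, rfl⟩
    exact le_trans (hinf_le c z hz) (hle_sup z c hc)
  -- hard direction via separation
  set gmap : (Fin m → ℝ) → (↥t → ℝ) := fun c i => f i.val c with hgdef
  set O : Set (↥t → ℝ) := {y | ∀ i, β < y i} with hOdef
  have hOopen : IsOpen O := by
    have : O = Set.univ.pi fun _ : ↥t => Set.Ioi β := by
      ext y; simp [hOdef, Set.mem_univ_pi, Set.mem_Ioi]
    rw [this]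
    exact isOpen_set_pi Set.finite_univ fun i _ => isOpen_Ioi
  have hOconv : Convex ℝ O := by
    have : O = Set.univ.pi fun _ : ↥t => Set.Ioi β := by
      ext y; simp [hOdef, Set.mem_univ_pi, Set.mem_Ioi]
    rw [this]
    exact convex_pi fun i _ => convex_Ioi β
  have hAconv : Convex ℝ (gmap '' U) := by
    rintro y₁ ⟨c₁, hc₁, rfl⟩ y₂ ⟨c₂, hc₂, rfl⟩ a b ha hb hab
    refine ⟨a • c₁ + b • c₂, hUconv hc₁ hc₂ ha hb hab, ?_⟩
    funext i
    have hb' : b = 1 - a := by linarith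
    have h := haffc i.val c₁ c₂ a ⟨ha, by linarith⟩
    simp only [hgdef, Pi.add_apply, Pi.smul_apply, smul_eq_mul]
    rw [hb'] at *
    exact h
  have hdisj : Disjoint O (gmap '' U) := by
    rw [Set.disjoint_left]
    rintro y hyO ⟨c, hc, rfl⟩
    have hβle : sInf ((fun z => f z c) '' H) ≤ β := le_csSup hPbdd ⟨c, hc, rfl⟩
    obtain ⟨z, hzH, hz⟩ := (hKccomp c).sInf_mem ⟨_, ⟨z₀, hz₀, rfl⟩⟩
    obtain ⟨ν, hν0, hν1, hzeq⟩ := hL2 z hzH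
    have hsum : f z c = ∑ i, ν i * f (i : ↥t).val c := by rw [hzeq]; exact hL1 c ν hν1
    obtain ⟨i, _, hi⟩ : ∃ i ∈ Finset.univ, (0:ℝ) < ν i := by
      apply Finset.exists_lt_of_sum_lt
      rw [hν1]; simp
    have hstrict : ∑ i : ↥t, ν i * β < ∑ i : ↥t, ν i * f (i : ↥t).val c := by
      refine Finset.sum_lt_sum (fun j _ => mul_le_mul_of_nonneg_left (le_of_lt (hyO j)) (hν0 j))
        ⟨i, Finset.mem_univ i, mul_lt_mul_of_pos_left (hyO i) hi⟩
    have hsumβ : ∑ i : ↥t, ν i * β = β := by rw [← Finset.sum_mul, hν1, one_mul]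
    rw [hsumβ, ← hsum] at hstrict
    have hz' : f z c = sInf ((fun z => f z c) '' H) := hz
    linarith
  obtain ⟨L, u, hLO, hLA⟩ := geometric_hahn_banach_open hOconv hOopen hAconv hdisj
  set lam : ↥t → ℝ := fun i => L (Pi.single i (1:ℝ) : ↥t → ℝ) with hlamdef
  have hrep : ∀ y : ↥t → ℝ, L y = ∑ i, y i * lam i := by
    intro y
    have hy : y = ∑ i, y i • (Pi.single i (1:ℝ) : ↥t → ℝ) := by
      funext j
      rw [Finset.sum_apply]
      simp [Pi.single_apply]
    conv_lhs => rw [hy]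
    rw [map_sum]
    exact Finset.sum_congr rfl fun i _ => by rw [map_smul, smul_eq_mul]
  set w₀ : ↥t → ℝ := fun _ => β + 1 with hw₀def
  have hw₀O : w₀ ∈ O := fun i => by simp [hw₀def]
  have hw₀u : L w₀ < u := hLO _ hw₀O
  have hlam0 : ∀ i, lam i ≤ 0 := by
    intro i
    by_contra hpos
    push_neg at hpos
    set τ := (u - L w₀) / lam i with hτdef
    have hτ : 0 ≤ τ := div_nonneg (by linarith) hpos.le
    have hmem : w₀ + τ • (Pi.single i (1:ℝ) : ↥t → ℝ) ∈ O := by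
      intro j
      have h0 : (0:ℝ) ≤ τ * ((Pi.single i (1:ℝ) : ↥t → ℝ) j) := by
        rw [Pi.single_apply]
        split_ifs <;> simp [hτ]
      have : (w₀ + τ • (Pi.single i (1:ℝ) : ↥t → ℝ)) j = (β + 1) + τ * (Pi.single i (1:ℝ) : ↥t → ℝ) j := rfl
      rw [this]
      linarith
    have hlt := hLO _ hmem
    rw [map_add, map_smul, smul_eq_mul] at hlt
    have hle : L (Pi.single i (1:ℝ) : ↥t → ℝ) = lam i := rfl
    rw [hle, hτdef, div_mul_cancel₀ _ (ne_of_gt hpos)] at hlt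
    linarith
  have hexneg : ∃ i, lam i < 0 := by
    by_contra hno
    push_neg at hno
    have hzero : ∀ i, lam i = 0 := fun i => le_antisymm (hlam0 i) (hno i)
    have hL0 : ∀ y, L y = 0 := by
      intro y; rw [hrep]; simp [hzero]
    have h1 := hLA _ ⟨c₀, hc₀, rfl⟩
    rw [hL0] at h1
    rw [hL0] at hw₀u
    linarith
  set σ := ∑ i, lam i with hσdef
  have hσneg : σ < 0 := by
    obtain ⟨i, hi⟩ := hexneg
    calc σ < ∑ _i : ↥t, (0:ℝ) :=
          Finset.sum_lt_sum (fun j _ => hlam0 j) ⟨i, Finset.mem_univ i, hi⟩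
      _ = 0 := by simp
  set ν : ↥t → ℝ := fun i => lam i / σ with hνdef
  have hν0 : ∀ i, 0 ≤ ν i := by
    intro i
    have h := div_nonneg (neg_nonneg.2 (hlam0 i)) (neg_nonneg.2 hσneg.le)
    rwa [neg_div_neg_eq] at h
  have hν1 : ∑ i, ν i = 1 := by
    rw [hνdef]
    rw [← Finset.sum_div, ← hσdef, div_self hσneg.ne]
  set zstar : Fin d → ℝ := ∑ i, ν i • (i : ↥t).val with hzstardef
  have hzstarH : zstar ∈ H := by
    have hmem := Finset.centerMass_mem_convexHull (Finset.univ : Finset ↥t)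
      (fun i _ => hν0 i) (by rw [hν1]; norm_num)
      (fun i _ => (by rw [← htcoe]; exact i.2 : (i : ↥t).val ∈ S))
    rwa [Finset.centerMass_eq_of_sum_1 _ _ hν1] at hmem
  have hfinal : ∀ c ∈ U, f zstar c ≤ β := by
    intro c hc
    have h1 : f zstar c = L (gmap c) / σ := by
      rw [hzstardef, hL1 c ν hν1, hrep (gmap c), Finset.sum_div]
      refine Finset.sum_congr rfl fun i _ => ?_
      rw [hνdef]
      have : gmap c i = f (i : ↥t).val c := rfl
      rw [this, div_mul_eq_mul_div, mul_comm]
    have h2 : L (gmap c) / σ ≤ u / σ := by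
      have hu := hLA _ ⟨c, hc, rfl⟩
      have := mul_le_mul_of_nonpos_right hu (inv_nonpos.2 hσneg.le)
      rwa [div_eq_mul_inv, div_eq_mul_inv]
    have h3 : ∀ ε > (0:ℝ), u / σ < β + ε := by
      intro ε hε
      have hmem : (fun _ : ↥t => β + ε) ∈ O := fun i => by simp [hOdef]; linarith
      have h4 := hLO _ hmem
      rw [hrep, ← Finset.mul_sum, ← hσdef] at h4
      rw [div_lt_iff_of_neg hσneg]
      exact h4
    by_contra hcon
    push_neg at hcon
    have := h3 ((f zstar c - β) / 2) (by linarith)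
    rw [h1] at hcon
    linarith [lt_of_le_of_lt h2 this]
  have hhard : sInf Q ≤ β := by
    have hsupz : sSup ((fun c => f zstar c) '' U) ≤ β := by
      refine csSup_le ⟨_, ⟨c₀, hc₀, rfl⟩⟩ ?_
      rintro b ⟨c, hc, rfl⟩
      exact hfinal c hc
    exact le_trans (csInf_le hQbdd ⟨zstar, hzstarH, rfl⟩) hsupz
  exact le_antisymm heasy hhard
end

section
/- Optimality at termination of the column-and-constraint generation algorithm: under the two-stage setting, let C be a nonempty subset of U, let x* ∈ X, and set μ* = sup_{c ∈ C} inf_{y ∈ Y(x*)} f((x*, y), c). Assume (i) μ* ≤ sup_{c ∈ C} inf_{y ∈ Y(x)} f((x, y), c) for every x ∈ X (x* is optimal for the master problem restricted to the scenarios in C), and (ii) sup_{c ∈ U} inf_{y ∈ Y(x*)} f((x*, y), c) ≤ μ* (the stopping criterion). Then x* is optimal for the two-stage robust problem: sup_{c ∈ U} inf_{y ∈ Y(x*)} f((x*, y), c) = inf_{x ∈ X} sup_{c ∈ U} inf_{y ∈ Y(x)} f((x, y), c), and this common value equals μ*. -/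
/-- Optimality at termination of the column-and-constraint generation algorithm:
if `x* ∈ X` is optimal for the master problem restricted to the scenarios in
`C ⊆ U` with value `μ*`, and the stopping criterion
`sup_{c ∈ U} inf_{y ∈ Y x*} f((x*,y),c) ≤ μ*` holds, then `x*` is optimal for
the two-stage robust problem and the optimal value equals `μ*`. -/
theorem ccg_optimal_at_termination
    (n₁ n₂ m : ℕ)
    (Z : Set ((Fin n₁ → ℝ) × (Fin n₂ → ℝ)))
    (hZfin : Z.Finite) (hZne : Z.Nonempty)
    (hZbin : ∀ p ∈ Z, (∀ i, p.1 i = 0 ∨ p.1 i = 1) ∧ (∀ j, p.2 j = 0 ∨ p.2 j = 1))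
    (U : Set (Fin m → ℝ)) (hUne : U.Nonempty) (hUcomp : IsCompact U)
    (f : ((Fin n₁ → ℝ) × (Fin n₂ → ℝ)) → (Fin m → ℝ) → ℝ)
    (hf : Continuous fun p : ((Fin n₁ → ℝ) × (Fin n₂ → ℝ)) × (Fin m → ℝ) => f p.1 p.2)
    (X : Set (Fin n₁ → ℝ)) (hX : X = {x | ∃ y, (x, y) ∈ Z})
    (Y : (Fin n₁ → ℝ) → Set (Fin n₂ → ℝ)) (hY : ∀ x, Y x = {y | (x, y) ∈ Z})
    (C : Set (Fin m → ℝ)) (hCne : C.Nonempty) (hCsub : C ⊆ U)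
    (xstar : Fin n₁ → ℝ) (hxstar : xstar ∈ X) (μstar : ℝ)
    (hμstar : μstar =
      sSup ((fun c => sInf ((fun y => f (xstar, y) c) '' Y xstar)) '' C))
    (hmaster : ∀ x ∈ X,
      μstar ≤ sSup ((fun c => sInf ((fun y => f (x, y) c) '' Y x)) '' C))
    (hstop : sSup ((fun c => sInf ((fun y => f (xstar, y) c) '' Y xstar)) '' U) ≤ μstar) :
    sSup ((fun c => sInf ((fun y => f (xstar, y) c) '' Y xstar)) '' U) =
        sInf ((fun x => sSup ((fun c => sInf ((fun y => f (x, y) c) '' Y x)) '' U)) '' X) ∧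
      sInf ((fun x => sSup ((fun c => sInf ((fun y => f (x, y) c) '' Y x)) '' U)) '' X) =
        μstar := by
  classical
  -- Y x is finite
  have hYfin : ∀ x, (Y x).Finite := by
    intro x
    rw [hY]
    apply (hZfin.image Prod.snd).subset
    rintro y hy
    exact ⟨(x, y), hy, rfl⟩
  have hYne : ∀ x ∈ X, (Y x).Nonempty := by
    intro x hx
    rw [hX] at hx
    obtain ⟨y, hy⟩ := hx
    exact ⟨y, by rw [hY]; exact hy⟩
  -- uniform upper bound
  obtain ⟨M, hM⟩ := ((hZfin.isCompact.prod hUcomp).image hf).bddAbove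
  have hMb : ∀ p ∈ Z, ∀ c ∈ U, f p c ≤ M := by
    intro p hp c hc
    exact hM (Set.mem_image_of_mem _ (Set.mk_mem_prod hp hc))
  set g : (Fin n₁ → ℝ) → (Fin m → ℝ) → ℝ :=
    fun x c => sInf ((fun y => f (x, y) c) '' Y x) with hg
  have hgM : ∀ x ∈ X, ∀ c ∈ U, g x c ≤ M := by
    intro x hx c hc
    obtain ⟨y₀, hy₀⟩ := hYne x hx
    have h1 : g x c ≤ f (x, y₀) c :=
      csInf_le ((hYfin x).image _).bddBelow ⟨y₀, hy₀, rfl⟩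
    exact h1.trans (hMb (x, y₀) (by rw [hY] at hy₀; exact hy₀) c hc)
  have hbddU : ∀ x ∈ X, BddAbove (g x '' U) := by
    intro x hx
    exact ⟨M, by rintro _ ⟨c, hc, rfl⟩; exact hgM x hx c hc⟩
  have hCU : ∀ x ∈ X, sSup (g x '' C) ≤ sSup (g x '' U) := by
    intro x hx
    exact csSup_le_csSup (hbddU x hx) (hCne.image _) (Set.image_mono hCsub)
  -- sup over U at xstar equals μstar
  have hge : μstar ≤ sSup (g xstar '' U) := hμstar ▸ hCU xstar hxstar
  have hSeq : sSup (g xstar '' U) = μstar := le_antisymm hstop hge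
  -- μstar is a lower bound on all sup_U values over X
  have hlow : ∀ x ∈ X, μstar ≤ sSup (g x '' U) :=
    fun x hx => (hmaster x hx).trans (hCU x hx)
  have hbddBelow : BddBelow ((fun x => sSup (g x '' U)) '' X) := by
    refine ⟨μstar, ?_⟩
    rintro _ ⟨x, hx, rfl⟩
    exact hlow x hx
  have hInf_le : sInf ((fun x => sSup (g x '' U)) '' X) ≤ μstar := by
    have := csInf_le hbddBelow (Set.mem_image_of_mem _ hxstar)
    rwa [hSeq] at this
  have hle_Inf : μstar ≤ sInf ((fun x => sSup (g x '' U)) '' X) := by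
    refine le_csInf (Set.Nonempty.image _ ⟨xstar, hxstar⟩) ?_
    rintro _ ⟨x, hx, rfl⟩
    exact hlow x hx
  have hInfeq : sInf ((fun x => sSup (g x '' U)) '' X) = μstar :=
    le_antisymm hInf_le hle_Inf
  exact ⟨hSeq.trans hInfeq.symm, hInfeq⟩
end

section
/- Discarding solutions with nonzero slack does not change the optimal value: let U be a nonempty convex subset of (Fin m → ℝ), S' a nonempty finite subset of (Fin d → ℝ), and f : (Fin d → ℝ) → (Fin m → ℝ) → ℝ such that for every z ∈ S' the function c ↦ f z c is concave on U. Let c* ∈ U, set μ* = inf_{z ∈ S'} f z c*, and assume that for every c ∈ U there exists z ∈ S' with f z c ≤ μ* (i.e. (μ*, c*) is optimal for the max–min problem over S'). Let S'' = {z ∈ S' | f z c* = μ*} be the set of solutions with zero slack at c*. Then S'' is nonempty and sup_{c ∈ U} inf_{z ∈ S''} f z c = μ*. -/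
/-- Discarding solutions with nonzero slack does not change the optimal value:
if `(μ*, c*)` with `μ* = inf_{z ∈ S'} f z c*` is optimal for the max–min
problem over `S'` (with `f z ·` concave on the convex set `U` for every
`z ∈ S'`), then the set `S'' = {z ∈ S' | f z c* = μ*}` of zero-slack solutions
is nonempty and `sup_{c ∈ U} inf_{z ∈ S''} f z c = μ*`. -/
theorem discard_nonzero_slack
    (d m : ℕ)
    (U : Set (Fin m → ℝ)) (hUne : U.Nonempty) (hUconv : Convex ℝ U)
    (S' : Set (Fin d → ℝ)) (hS'fin : S'.Finite) (hS'ne : S'.Nonempty)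
    (f : (Fin d → ℝ) → (Fin m → ℝ) → ℝ)
    (hconc : ∀ z ∈ S', ConcaveOn ℝ U (fun c => f z c))
    (cstar : Fin m → ℝ) (hcstar : cstar ∈ U) (μstar : ℝ)
    (hμstar : μstar = sInf ((fun z => f z cstar) '' S'))
    (hopt : ∀ c ∈ U, ∃ z ∈ S', f z c ≤ μstar) :
    {z ∈ S' | f z cstar = μstar}.Nonempty ∧
      sSup ((fun c => sInf ((fun z => f z c) '' {z ∈ S' | f z cstar = μstar})) '' U) =
        μstar := by
  set S'' := {z ∈ S' | f z cstar = μstar} with hS''def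
  have hmem : μstar ∈ (fun z => f z cstar) '' S' := by
    rw [hμstar]
    exact (hS'ne.image _).csInf_mem (hS'fin.image _)
  obtain ⟨z0, hz0, hz0eq⟩ := hmem
  have hS''ne : S''.Nonempty := ⟨z0, hz0, hz0eq⟩
  refine ⟨hS''ne, ?_⟩
  have hS''sub : S'' ⊆ S' := fun z hz => hz.1
  have hS''fin : S''.Finite := hS'fin.subset hS''sub
  -- every f z cstar is ≥ μstar
  have hlb : ∀ z ∈ S', μstar ≤ f z cstar := by
    intro z hz
    rw [hμstar]
    exact csInf_le (hS'fin.image _).bddBelow ⟨z, hz, rfl⟩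
  -- value at cstar
  have hval : sInf ((fun z => f z cstar) '' S'') = μstar := by
    have himg : (fun z => f z cstar) '' S'' = {μstar} := by
      apply Set.eq_singleton_iff_nonempty_unique_mem.mpr
      refine ⟨hS''ne.image _, ?_⟩
      rintro x ⟨z, hz, rfl⟩
      exact hz.2
    rw [himg]
    exact csInf_singleton μstar
  -- upper bound: for every c ∈ U, inf over S'' is ≤ μstar
  have hub : ∀ c ∈ U, sInf ((fun z => f z c) '' S'') ≤ μstar := by
    intro c hc
    by_contra h
    push_neg at h
    have hgt : ∀ z ∈ S'', μstar < f z c := by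
      intro z hz
      calc μstar < sInf ((fun z => f z c) '' S'') := h
        _ ≤ f z c := csInf_le (hS''fin.image _).bddBelow ⟨z, hz, rfl⟩
    -- for z with f z c ≤ μstar, z is not in S'', hence f z cstar > μstar
    have hA : ∀ z ∈ S', f z c ≤ μstar → μstar < f z cstar := by
      intro z hz hb
      rcases lt_or_eq_of_le (hlb z hz) with h' | h'
      · exact h'
      · exact absurd hb (not_le.mpr (hgt z ⟨hz, h'.symm⟩))
    -- choose a small step size t
    set F := hS'fin.toFinset with hF
    have hFne : F.Nonempty := by
      rw [hF, Set.Finite.toFinset_nonempty]; exact hS'ne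
    set r : (Fin d → ℝ) → ℝ := fun z =>
      if μstar < f z c then (1:ℝ)/2
      else (f z cstar - μstar) / (2 * (f z cstar - f z c)) with hr
    have hr_pos : ∀ z ∈ F, 0 < r z := by
      intro z hz
      have hzS' : z ∈ S' := hS'fin.mem_toFinset.mp hz
      by_cases hb : μstar < f z c
      · simp [hr, hb]
      · push_neg at hb
        have hA' := hA z hzS' hb
        have : 0 < f z cstar - f z c := by linarith
        simp only [hr, if_neg (not_lt.mpr hb)]
        have h0 : 0 < f z cstar - μstar := by linarith
        exact div_pos h0 (by linarith)
    have hr_le : ∀ z ∈ F, r z ≤ 1/2 := by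
      intro z hz
      have hzS' : z ∈ S' := hS'fin.mem_toFinset.mp hz
      by_cases hb : μstar < f z c
      · simp [hr, hb]
      · push_neg at hb
        have hA' := hA z hzS' hb
        have h1 : 0 < f z cstar - μstar := by linarith
        have h2 : f z cstar - μstar ≤ f z cstar - f z c := by linarith
        simp only [hr, if_neg (not_lt.mpr hb)]
        rw [div_le_iff₀ (by linarith)]
        linarith
    set t := F.inf' hFne r with ht
    have ht_pos : 0 < t := by
      rw [ht, Finset.lt_inf'_iff]
      exact hr_pos
    have ht_le : t ≤ 1/2 := by
      obtain ⟨z, hz⟩ := hFne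
      exact le_trans (Finset.inf'_le r hz) (hr_le z hz)
    have ht1 : (1 - t) + t = 1 := by ring
    have hct : (1 - t) • cstar + t • c ∈ U :=
      hUconv hcstar hc (by linarith) (le_of_lt ht_pos) ht1
    obtain ⟨z, hzS', hle⟩ := hopt _ hct
    have hzF : z ∈ F := hS'fin.mem_toFinset.mpr hzS'
    have htr : t ≤ r z := Finset.inf'_le r hzF
    have hcomb : (1 - t) * f z cstar + t * f z c ≤ f z ((1 - t) • cstar + t • c) := by
      have := (hconc z hzS').2 hcstar hc (by linarith) (le_of_lt ht_pos) ht1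
      simpa [smul_eq_mul] using this
    have hstrict : μstar < (1 - t) * f z cstar + t * f z c := by
      by_cases hb : μstar < f z c
      · have := hlb z hzS'
        nlinarith
      · push_neg at hb
        have hA' := hA z hzS' hb
        have h1 : 0 < f z cstar - f z c := by linarith
        have htr' : t ≤ (f z cstar - μstar) / (2 * (f z cstar - f z c)) := by
          rw [hr] at htr
          simp only [if_neg (not_lt.mpr hb)] at htr
          exact htr
        have : t * (2 * (f z cstar - f z c)) ≤ f z cstar - μstar :=
          (le_div_iff₀ (by linarith)).mp htr'
        nlinarith
    linarith
  -- conclude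
  apply le_antisymm
  · apply csSup_le (hUne.image _)
    rintro x ⟨c, hc, rfl⟩
    exact hub c hc
  · apply le_csSup
    · refine ⟨μstar, ?_⟩
      rintro x ⟨c, hc, rfl⟩
      exact hub c hc
    · exact ⟨cstar, hcstar, hval⟩
end
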